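/- arXiv:2401.04789 — 6 statements merged into one kernel-verified Lean document; each statement's English description precedes it below -/
import Mathlib

section
/- Let G be a finite group with normal subgroups A ≤ B, and let r, s be distinct primes dividing |B/A| but not dividing |A| and not dividing |G/B|. Then G contains an element of order r·s if and only if B/A contains an element of order r·s. -/
/-!
An element of order `r * s` has order coprime to `|G/B|`, so it lies in `B`; its order is also
coprime to `|A|`, so its image in `B/A` still has order `r * s`. Conversely, any preimage in `B`
of an element of order `r * s` in `B/A` has order divisible by `r * s`, so a suitable power of it
has order exactly `r * s`.
-/

lemma Nat.coprime_mul_of_prime_not_dvd {r s n : ℕ} (hr : r.Prime) (hs : s.Prime)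
    (hrn : ¬ r ∣ n) (hsn : ¬ s ∣ n) : (r * s).Coprime n :=
  Nat.Coprime.mul_left ((hr.coprime_iff_not_dvd).2 hrn) ((hs.coprime_iff_not_dvd).2 hsn)

lemma exists_orderOf_eq_of_dvd_orderOf {M : Type*} [Monoid M] {x : M} {n : ℕ}
    (hx : IsOfFinOrder x) (hn : n ∣ orderOf x) : ∃ y : M, orderOf y = n :=
  ⟨x ^ (orderOf x / n), orderOf_pow_orderOf_div hx.orderOf_pos.ne' hn⟩

namespace QuotientGroup

variable {G : Type*} [Group G] (N : Subgroup G) [N.Normal]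

lemma mem_of_coprime_orderOf_natCard {g : G} (hg : (orderOf g).Coprime (Nat.card (G ⧸ N))) :
    g ∈ N := by
  have h : orderOf (g : G ⧸ N) = 1 :=
    Nat.eq_one_of_dvd_coprimes hg (orderOf_map_dvd (mk' N) g) (orderOf_dvd_natCard _)
  rwa [orderOf_eq_one_iff, eq_one_iff] at h

lemma orderOf_mk_eq_of_coprime {g : G} (hg : (orderOf g).Coprime (Nat.card N)) :
    orderOf (g : G ⧸ N) = orderOf g := by
  set k := orderOf (g : G ⧸ N)
  have hmem : g ^ k ∈ N := by
    rw [← eq_one_iff, QuotientGroup.mk_pow]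
    exact pow_orderOf_eq_one _
  have hpow : g ^ k = 1 :=
    orderOf_eq_one_iff.1 <|
      Nat.eq_one_of_dvd_coprimes hg (orderOf_pow_dvd k) (N.orderOf_dvd_natCard hmem)
  exact (orderOf_map_dvd (mk' N) g).antisymm (orderOf_dvd_of_pow_eq_one hpow)

end QuotientGroup

theorem gk_adjacency_section_general {G : Type*} [Group G] [Finite G]
    (A B : Subgroup G) [A.Normal] [B.Normal]
    (r s : ℕ) (hr : r.Prime) (hs : s.Prime)
    (hrA : ¬ r ∣ Nat.card A) (hsA : ¬ s ∣ Nat.card A)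
    (hrG : ¬ r ∣ Nat.card (G ⧸ B)) (hsG : ¬ s ∣ Nat.card (G ⧸ B)) :
    (∃ g : G, orderOf g = r * s) ↔ (∃ x : B ⧸ A.subgroupOf B, orderOf x = r * s) := by
  constructor
  · rintro ⟨g, hg⟩
    have hgB : g ∈ B := QuotientGroup.mem_of_coprime_orderOf_natCard B
      (hg ▸ Nat.coprime_mul_of_prime_not_dvd hr hs hrG hsG)
    have hcop : (orderOf (⟨g, hgB⟩ : B)).Coprime (Nat.card (A.subgroupOf B)) := by
      rw [Subgroup.orderOf_mk, hg]
      exact (Nat.coprime_mul_of_prime_not_dvd hr hs hrA hsA).coprime_dvd_right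
        (A.card_comap_dvd_of_injective B.subtype Subtype.coe_injective)
    exact ⟨_, (QuotientGroup.orderOf_mk_eq_of_coprime _ hcop).trans
      ((Subgroup.orderOf_mk g hgB).trans hg)⟩
  · rintro ⟨x, hx⟩
    obtain ⟨b, rfl⟩ := QuotientGroup.mk'_surjective (A.subgroupOf B) x
    obtain ⟨y, hy⟩ := exists_orderOf_eq_of_dvd_orderOf (isOfFinOrder_of_finite b)
      (hx ▸ orderOf_map_dvd _ b)
    exact ⟨y, (Subgroup.orderOf_coe y).trans hy⟩

/-- Let `G` be a finite group with normal subgroups `A ≤ B`, and let `r, s` be distinct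
primes dividing `|B/A|` but not dividing `|A|` and not dividing `|G/B|`. Then `G` contains
an element of order `r·s` if and only if `B/A` contains an element of order `r·s`. -/
theorem gk_adjacency_section {G : Type*} [Group G] [Finite G]
    (A B : Subgroup G) [A.Normal] [B.Normal] (hAB : A ≤ B)
    (r s : ℕ) (hr : r.Prime) (hs : s.Prime) (hrs : r ≠ s)
    (hrB : r ∣ Nat.card (B ⧸ A.subgroupOf B)) (hsB : s ∣ Nat.card (B ⧸ A.subgroupOf B))
    (hrA : ¬ r ∣ Nat.card A) (hsA : ¬ s ∣ Nat.card A)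
    (hrG : ¬ r ∣ Nat.card (G ⧸ B)) (hsG : ¬ s ∣ Nat.card (G ⧸ B)) :
    (∃ g : G, orderOf g = r * s) ↔ (∃ x : B ⧸ A.subgroupOf B, orderOf x = r * s) :=
  gk_adjacency_section_general A B r s hr hs hrA hsA hrG hsG
end

section
/- Let G be a finite group, A a normal subgroup of G, and H a subgroup of A. Then H is pronormal in G if and only if H is pronormal in A and G = A · N_G(H). -/
/-! If `H` is pronormal in `G` and `g ∈ G`, the element `x ∈ ⟨H, H^g⟩ ≤ A` conjugating `H`
to `H^g` gives `g = x · (x⁻¹g)` with `x⁻¹g ∈ N_G(H)`: a Frattini argument. Conversely, if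
`g = a · n` with `a ∈ A` and `n ∈ N_G(H)`, then `H^g = H^a`, so pronormality in `A` applies. -/

/-- `H` is pronormal in the subgroup `K` of `G`: for every `g ∈ K`, the subgroups `H` and
`H^g` are conjugate in the subgroup `⟨H, H^g⟩` that they generate. -/
def IsPronormalIn {G : Type*} [Group G] (H K : Subgroup G) : Prop :=
  ∀ g ∈ K, ∃ x ∈ H ⊔ H.map (MulAut.conj g).toMonoidHom,
    H.map (MulAut.conj x).toMonoidHom = H.map (MulAut.conj g).toMonoidHom

namespace Subgroup

variable {G : Type*} [Group G] {H : Subgroup G}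

theorem map_conj_mul (H : Subgroup G) (a b : G) :
    H.map (MulAut.conj (a * b)).toMonoidHom =
      (H.map (MulAut.conj b).toMonoidHom).map (MulAut.conj a).toMonoidHom := by
  rw [map_map, map_mul]
  rfl

theorem mem_normalizer_iff_map_conj_toMonoidHom_eq {g : G} :
    g ∈ normalizer (H : Set G) ↔ H.map (MulAut.conj g).toMonoidHom = H :=
  mem_normalizer_iff_map_conj_eq

theorem map_conj_le_of_le_normal {A : Subgroup G} [A.Normal] (hHA : H ≤ A) (g : G) :
    H.map (MulAut.conj g).toMonoidHom ≤ A :=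
  (map_mono hHA).trans (Normal.map_conj_eq A g).le

theorem inv_mul_mem_normalizer_of_map_conj_eq {x g : G}
    (h : H.map (MulAut.conj x).toMonoidHom = H.map (MulAut.conj g).toMonoidHom) :
    x⁻¹ * g ∈ normalizer (H : Set G) := by
  rw [mem_normalizer_iff_map_conj_toMonoidHom_eq, map_conj_mul, ← h, ← map_conj_mul,
    inv_mul_cancel, map_one]
  exact H.map_id

end Subgroup

namespace IsPronormalIn

open Subgroup

variable {G : Type*} [Group G] {H K L : Subgroup G}

theorem anti (h : IsPronormalIn H L) (hKL : K ≤ L) : IsPronormalIn H K :=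
  fun g hg ↦ h g (hKL hg)

theorem exists_eq_mul_normalizer {A : Subgroup G} [A.Normal] (h : IsPronormalIn H ⊤)
    (hHA : H ≤ A) (g : G) : ∃ a ∈ A, ∃ n ∈ normalizer (H : Set G), g = a * n := by
  obtain ⟨x, hx, hconj⟩ := h g trivial
  exact ⟨x, sup_le hHA (map_conj_le_of_le_normal hHA g) hx, x⁻¹ * g,
    inv_mul_mem_normalizer_of_map_conj_eq hconj, (mul_inv_cancel_left x g).symm⟩

theorem top_of_forall_eq_mul_normalizer (h : IsPronormalIn H K)
    (hfac : ∀ g : G, ∃ a ∈ K, ∃ n ∈ normalizer (H : Set G), g = a * n) :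
    IsPronormalIn H ⊤ := by
  rintro g -
  obtain ⟨a, ha, n, hn, rfl⟩ := hfac g
  have hconj : H.map (MulAut.conj (a * n)).toMonoidHom = H.map (MulAut.conj a).toMonoidHom := by
    rw [map_conj_mul, mem_normalizer_iff_map_conj_toMonoidHom_eq.mp hn]
  rw [hconj]
  exact h a ha

end IsPronormalIn

theorem pronormal_iff_of_le_normal_general {G : Type*} [Group G]
    (A H : Subgroup G) [A.Normal] (hHA : H ≤ A) :
    IsPronormalIn H ⊤ ↔
      (IsPronormalIn H A ∧ ∀ g : G, ∃ a ∈ A, ∃ n ∈ Subgroup.normalizer (H : Set G), g = a * n) :=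
  ⟨fun h ↦ ⟨h.anti le_top, h.exists_eq_mul_normalizer hHA⟩,
    fun ⟨hA, hfac⟩ ↦ hA.top_of_forall_eq_mul_normalizer hfac⟩

/-- Let `G` be a finite group, `A` a normal subgroup of `G`, and `H ≤ A`. Then `H` is
pronormal in `G` if and only if `H` is pronormal in `A` and `G = A · N_G(H)`. -/
theorem pronormal_iff_of_le_normal {G : Type*} [Group G] [Finite G]
    (A H : Subgroup G) [A.Normal] (hHA : H ≤ A) :
    IsPronormalIn H ⊤ ↔
      (IsPronormalIn H A ∧ ∀ g : G, ∃ a ∈ A, ∃ n ∈ Subgroup.normalizer (H : Set G), g = a * n) :=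
  pronormal_iff_of_le_normal_general A H hHA
end

section
/- For the alternating group Alt_n (n ≥ 5), a prime p is non-adjacent to 2 in the Gruenberg–Kegel graph Γ(Alt_n) if and only if n − 4 < p ≤ n. In particular, Alt_n contains an element of order 2p for a prime p ≤ n if and only if p + 4 ≤ n. -/
/-!
A permutation of order `2p` has a cycle of length divisible by `p` and a cycle of even length.
Even permutations have an even number of even-length cycles. So either the cycle of length
divisible by `p` is a `2p`-cycle, accompanied by at least one more cycle, or it is a `p`-cycle
(`p` odd) accompanied by two even-length cycles; both need at least `p + 4` points. Conversely,
the cycle types `{4, 2}` (for `p = 2`) and `{p, 2, 2}` (for odd `p`) are realized in `Alt_n`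
once `p + 4 ≤ n`.
-/

open Equiv Equiv.Perm Multiset

theorem exists_alternatingGroup_orderOf_eq_iff {α : Type*} [Fintype α] [DecidableEq α] (k : ℕ) :
    (∃ g : alternatingGroup α, orderOf g = k) ↔
      ∃ m : Multiset ℕ, m.sum ≤ Fintype.card α ∧ (∀ a ∈ m, 2 ≤ a) ∧
        Even (m.sum + card m) ∧ m.lcm = k := by
  constructor
  · rintro ⟨g, rfl⟩
    have hsign := sign_of_cycleType (g : Perm α)
    rw [mem_alternatingGroup.mp g.2] at hsign
    exact ⟨_, sum_cycleType_le _, fun _ => two_le_of_mem_cycleType,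
      (neg_one_pow_eq_one_iff_even (by decide)).mp hsign.symm,
      by rw [lcm_cycleType, Subgroup.orderOf_coe]⟩
  · rintro ⟨m, hsum, htwo, hpar, rfl⟩
    obtain ⟨σ, rfl⟩ := (exists_with_cycleType_iff α).mpr ⟨hsum, htwo⟩
    exact ⟨⟨σ, mem_alternatingGroup.mpr (by rw [sign_of_cycleType, hpar.neg_one_pow])⟩,
      by rw [Subgroup.orderOf_mk, lcm_cycleType]⟩

namespace Multiset

theorem add_two_le_sum_of_mem_of_even {M : Multiset ℕ} {a : ℕ} (hM : ∀ m ∈ M, 2 ≤ m)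
    (hpar : Even (M.sum + card M)) (ha : a ∈ M) (ha_even : Even a) : a + 2 ≤ M.sum := by
  obtain ⟨M', rfl⟩ := exists_cons_of_mem ha
  rw [sum_cons, card_cons] at hpar
  rw [sum_cons]
  obtain ⟨b, hb⟩ : ∃ b, b ∈ M' := by
    refine exists_mem_of_ne_zero fun hM' => ?_
    subst hM'
    simp only [sum_zero, add_zero, card_zero, zero_add] at hpar
    exact Nat.not_even_iff_odd.mpr ha_even.add_one hpar
  have := single_le_sum (fun x _ => Nat.zero_le x) b hb
  have := hM b (mem_cons_of_mem hb)
  omega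

theorem add_four_le_sum_of_lcm_eq_two_mul_prime {M : Multiset ℕ} {p : ℕ} (hp : p.Prime)
    (hM : ∀ m ∈ M, 2 ≤ m) (hpar : Even (M.sum + card M)) (hlcm : M.lcm = 2 * p) :
    p + 4 ≤ M.sum := by
  obtain ⟨a, haM, ha⟩ : ∃ a ∈ M, ¬ a ∣ 2 := by
    by_contra! h
    have := Nat.le_of_dvd two_pos (hlcm ▸ lcm_dvd.mpr h)
    linarith [hp.two_le]
  obtain ⟨b, hbM, hb⟩ : ∃ b ∈ M, 2 ∣ b :=
    Nat.prime_two.prime.exists_mem_multiset_dvd <|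
      (hlcm ▸ dvd_mul_right 2 p).trans (lcm_dvd.mpr fun _ => dvd_prod)
  obtain ⟨k, l, hk, hl, rfl⟩ := Nat.dvd_mul.mp (hlcm ▸ dvd_lcm haM)
  rcases (Nat.dvd_prime hp).mp hl with rfl | hl
  · exact absurd (by simpa using hk) ha
  subst l
  rcases (Nat.dvd_prime Nat.prime_two).mp hk with rfl | rfl
  · rw [one_mul] at ha haM
    have hp_odd : Odd p := hp.odd_of_ne_two (by rintro rfl; exact ha dvd_rfl)
    obtain ⟨M', rfl⟩ := exists_cons_of_mem haM
    rw [sum_cons, card_cons] at hpar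
    rw [sum_cons]
    have hbM' : b ∈ M' := by
      rcases mem_cons.mp hbM with rfl | h
      · exact absurd (even_iff_two_dvd.mpr hb) (Nat.not_even_iff_odd.mpr hp_odd)
      · exact h
    have hpar' : Even (M'.sum + card M') := by
      have : Even (p + 1) := hp_odd.add_one
      rw [show p + M'.sum + (card M' + 1) = (p + 1) + (M'.sum + card M') by ring] at hpar
      exact (Nat.even_add.mp hpar).mp this
    have := add_two_le_sum_of_mem_of_even (fun m hm => hM m (mem_cons_of_mem hm)) hpar' hbM'
      (even_iff_two_dvd.mpr hb)
    have := hM b hbM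
    omega
  · have := add_two_le_sum_of_mem_of_even hM hpar haM (even_two_mul p)
    linarith [hp.two_le]

end Multiset

theorem exists_alternatingGroup_orderOf_eq_two_mul_prime_iff {α : Type*} [Fintype α]
    [DecidableEq α] {p : ℕ} (hp : p.Prime) :
    (∃ g : alternatingGroup α, orderOf g = 2 * p) ↔ p + 4 ≤ Fintype.card α := by
  rw [exists_alternatingGroup_orderOf_eq_iff]
  constructor
  · rintro ⟨m, hsum, htwo, hpar, hlcm⟩
    exact (add_four_le_sum_of_lcm_eq_two_mul_prime hp htwo hpar hlcm).trans hsum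
  · intro h
    rcases hp.eq_two_or_odd' with rfl | hp_odd
    · exact ⟨{4, 2}, by simpa using h, by simp, by decide, by decide⟩
    · refine ⟨{p, 2, 2}, by simpa [add_assoc] using h, by simp [hp.two_le], ?_, ?_⟩
      · simpa [add_assoc, parity_simps] using hp_odd
      · simp [lcm_eq_nat_lcm, hp_odd.coprime_two_right.lcm_eq_mul, mul_comm]

theorem prime_le_card_of_dvd_card_alternatingGroup {α : Type*} [Fintype α] [DecidableEq α]
    {p : ℕ} (hp : p.Prime) (hdvd : p ∣ Nat.card (alternatingGroup α)) : p ≤ Fintype.card α := by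
  have : p ∣ (Fintype.card α).factorial := by
    rw [← Nat.card_eq_fintype_card, ← Nat.card_perm]
    exact hdvd.trans (Subgroup.card_subgroup_dvd_card _)
  exact hp.dvd_factorial.mp this

theorem alternating_nonadjacent_two_general (n : ℕ) :
    (∀ p : ℕ, p.Prime → p ∣ Nat.card (alternatingGroup (Fin n)) →
      ((¬ ∃ g : alternatingGroup (Fin n), orderOf g = 2 * p) ↔ (n - 4 < p ∧ p ≤ n))) ∧
    (∀ p : ℕ, p.Prime → p ≤ n →
      ((∃ g : alternatingGroup (Fin n), orderOf g = 2 * p) ↔ p + 4 ≤ n)) := by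
  have key (p : ℕ) (hp : p.Prime) :
      (∃ g : alternatingGroup (Fin n), orderOf g = 2 * p) ↔ p + 4 ≤ n := by
    simpa using exists_alternatingGroup_orderOf_eq_two_mul_prime_iff (α := Fin n) hp
  refine ⟨fun p hp hdvd => ?_, fun p hp _ => key p hp⟩
  have hpn : p ≤ n := by simpa using prime_le_card_of_dvd_card_alternatingGroup hp hdvd
  rw [key p hp]
  have := hp.pos
  omega

/-- For the alternating group `Alt_n` (`n ≥ 5`), a prime `p` (vertex of the
Gruenberg–Kegel graph, i.e. `p` divides `|Alt_n|`) is non-adjacent to `2` in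
`Γ(Alt_n)` if and only if `n − 4 < p ≤ n`.  In particular, `Alt_n` contains an
element of order `2p` for a prime `p ≤ n` if and only if `p + 4 ≤ n`. -/
theorem alternating_nonadjacent_two (n : ℕ) (hn : 5 ≤ n) :
    (∀ p : ℕ, p.Prime → p ∣ Nat.card (alternatingGroup (Fin n)) →
      ((¬ ∃ g : alternatingGroup (Fin n), orderOf g = 2 * p) ↔ (n - 4 < p ∧ p ≤ n))) ∧
    (∀ p : ℕ, p.Prime → p ≤ n →
      ((∃ g : alternatingGroup (Fin n), orderOf g = 2 * p) ↔ p + 4 ≤ n)) :=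
  alternating_nonadjacent_two_general n
end

section
/- Let N be an elementary abelian normal subgroup of a finite group G, set H = G/N, and let φ : H → Aut(N) be the homomorphism induced by conjugation (well-defined since N is abelian). Then the Gruenberg–Kegel graph of G equals the Gruenberg–Kegel graph of the semidirect product N ⋊_φ H. -/
/-!
`G` and `N ⋊[φ] (G ⧸ N)` are both extensions of `N` by `H = G ⧸ N` in which conjugation acts on
`N` through `φ`. In any such extension `E`, with `N` of prime exponent `p`, take `x` of order
`r * s`. Its image in `H` cannot be trivial, since `N` has no element of order `r * s`; if it has
order `r`, then `x ^ r` is an element of `N` of order `s` fixed by the image of `x`. Conversely,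
if `h ∈ H` of order `r` fixes `n ∈ N` of order `s`, then `s = p`, so a lift `e` of `h` has order
`r` or `r * s`, and in the first case `e * n` has order `r * s`. Hence whether `E` has an element
of order `r * s` depends only on `(N, H, φ)`.
-/

open SemidirectProduct

def HasFixedPointOfOrders {N H : Type*} [Group N] [Group H] (φ : H →* MulAut N) (r s : ℕ) :
    Prop :=
  ∃ (h : H) (n : N), orderOf h = r ∧ orderOf n = s ∧ φ h n = n

namespace GroupExtension

variable {N E H : Type*} [Group N] [Group E] [Group H]

def InducesAction (S : GroupExtension N E H) (φ : H →* MulAut N) : Prop :=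
  ∀ (e : E) (n : N), S.inl (φ (S.rightHom e) n) = e * S.inl n * e⁻¹

theorem orderOf_inl (S : GroupExtension N E H) (n : N) : orderOf (S.inl n) = orderOf n :=
  orderOf_injective S.inl S.inl_injective n

theorem exists_inl_eq_of_rightHom_eq_one (S : GroupExtension N E H) {e : E}
    (he : S.rightHom e = 1) : ∃ n, S.inl n = e := by
  rwa [← MonoidHom.mem_range, S.range_inl_eq_ker_rightHom]

theorem pow_eq_one_of_rightHom_eq_one (S : GroupExtension N E H) {p : ℕ}
    (hexp : ∀ n : N, n ^ p = 1) {e : E} (he : S.rightHom e = 1) : e ^ p = 1 := by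
  obtain ⟨n, rfl⟩ := S.exists_inl_eq_of_rightHom_eq_one he
  rw [← map_pow, hexp, map_one]

theorem orderOf_dvd_orderOf_rightHom_mul (S : GroupExtension N E H) {p : ℕ}
    (hexp : ∀ n : N, n ^ p = 1) (e : E) : orderOf e ∣ orderOf (S.rightHom e) * p := by
  refine orderOf_dvd_of_pow_eq_one ?_
  rw [pow_mul]
  exact S.pow_eq_one_of_rightHom_eq_one hexp (by rw [map_pow, pow_orderOf_eq_one])

theorem exists_orderOf_eq_of_rightHom (S : GroupExtension N E H) {p : ℕ} (hp : p ≠ 0)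
    (hexp : ∀ n : N, n ^ p = 1) {k : ℕ} (hk : k ≠ 0) {h : H} (hh : orderOf h = k) :
    ∃ e : E, orderOf e = k := by
  obtain ⟨e, rfl⟩ := S.rightHom_surjective h
  have hke : k ∣ orderOf e := hh ▸ orderOf_map_dvd S.rightHom e
  have he : orderOf e ≠ 0 :=
    ne_zero_of_dvd_ne_zero (hh ▸ mul_ne_zero hk hp) (S.orderOf_dvd_orderOf_rightHom_mul hexp e)
  exact ⟨e ^ (orderOf e / k), orderOf_pow_orderOf_div he hke⟩

variable {S : GroupExtension N E H} {φ : H →* MulAut N}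

theorem InducesAction.apply_eq_self_iff_commute (hS : S.InducesAction φ) (e : E) (n : N) :
    φ (S.rightHom e) n = n ↔ Commute e (S.inl n) := by
  rw [← S.inl_injective.eq_iff, hS e n, mul_inv_eq_iff_eq_mul]
  rfl

theorem InducesAction.hasFixedPointOfOrders_of_orderOf_rightHom {r s : ℕ}
    (hS : S.InducesAction φ) (hr : r ≠ 0) {e : E} (he : orderOf e = r * s)
    (hre : orderOf (S.rightHom e) = r) :
    HasFixedPointOfOrders φ r s := by
  obtain ⟨n, hn⟩ := S.exists_inl_eq_of_rightHom_eq_one (e := e ^ r)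
    (by rw [map_pow, ← hre, pow_orderOf_eq_one])
  have hfix : φ (S.rightHom e) n = n :=
    (hS.apply_eq_self_iff_commute e n).mpr (hn ▸ Commute.self_pow e r)
  refine ⟨S.rightHom e, n, hre, ?_, hfix⟩
  rw [← S.orderOf_inl, hn, orderOf_pow_of_dvd hr (he ▸ dvd_mul_right r s), he,
    Nat.mul_div_cancel_left s (Nat.pos_of_ne_zero hr)]

theorem InducesAction.exists_orderOf_eq_mul_of_hasFixedPointOfOrders {p r s : ℕ}
    (hS : S.InducesAction φ) (hp : p.Prime) (hexp : ∀ n : N, n ^ p = 1) (hr : r.Prime)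
    (hs : s.Prime) (hrs : r ≠ s)
    (hfix : HasFixedPointOfOrders φ r s) : ∃ e : E, orderOf e = r * s := by
  obtain ⟨h, n, hh, hn, hfix⟩ := hfix
  have hcop : r.Coprime s := (Nat.coprime_primes hr hs).mpr hrs
  obtain rfl : s = p :=
    (Nat.prime_dvd_prime_iff_eq hs hp).mp (hn ▸ orderOf_dvd_of_pow_eq_one (hexp n))
  obtain ⟨e, rfl⟩ := S.rightHom_surjective h
  have hre : r ∣ orderOf e := hh ▸ orderOf_map_dvd S.rightHom e
  have hers : orderOf e ∣ r * s := hh ▸ S.orderOf_dvd_orderOf_rightHom_mul hexp e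
  by_cases hse : s ∣ orderOf e
  · exact ⟨e, Nat.dvd_antisymm hers (hcop.mul_dvd_of_dvd_of_dvd hre hse)⟩
  have her : orderOf e = r := Nat.dvd_antisymm
    ((hs.coprime_iff_not_dvd.mpr hse).symm.dvd_of_dvd_mul_right hers) hre
  have hcomm : Commute e (S.inl n) := (hS.apply_eq_self_iff_commute e n).mp hfix
  refine ⟨e * S.inl n, ?_⟩
  rw [hcomm.orderOf_mul_eq_mul_orderOf_of_coprime (by rwa [her, S.orderOf_inl, hn]), her,
    S.orderOf_inl, hn]

theorem InducesAction.exists_orderOf_eq_mul_iff {p r s : ℕ} (hS : S.InducesAction φ)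
    (hp : p.Prime) (hexp : ∀ n : N, n ^ p = 1) (hr : r.Prime) (hs : s.Prime) (hrs : r ≠ s) :
    (∃ e : E, orderOf e = r * s) ↔
      (∃ h : H, orderOf h = r * s) ∨
        HasFixedPointOfOrders φ r s ∨ HasFixedPointOfOrders φ s r := by
  constructor
  · rintro ⟨e, he⟩
    obtain ⟨a, b, ha, hb, hd⟩ := Nat.dvd_mul.mp (he ▸ orderOf_map_dvd S.rightHom e)
    rcases (Nat.dvd_prime hr).mp ha with rfl | rfl <;>
      rcases (Nat.dvd_prime hs).mp hb with rfl | rfl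
    · have hdvd : r * s ∣ p := he ▸ orderOf_dvd_of_pow_eq_one (S.pow_eq_one_of_rightHom_eq_one
        hexp (orderOf_eq_one_iff.mp (hd.symm.trans (one_mul _))))
      exact absurd (((Nat.prime_dvd_prime_iff_eq hr hp).mp (dvd_of_mul_right_dvd hdvd)).trans
        ((Nat.prime_dvd_prime_iff_eq hs hp).mp (dvd_of_mul_left_dvd hdvd)).symm) hrs
    · exact .inr (.inr (hS.hasFixedPointOfOrders_of_orderOf_rightHom hs.ne_zero
        (he.trans (mul_comm _ _)) (hd.symm.trans (one_mul _))))
    · exact .inr (.inl (hS.hasFixedPointOfOrders_of_orderOf_rightHom hr.ne_zero he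
        (hd.symm.trans (mul_one _))))
    · exact .inl ⟨S.rightHom e, hd.symm⟩
  · rintro (⟨h, hh⟩ | hfix | hfix)
    · exact S.exists_orderOf_eq_of_rightHom hp.ne_zero hexp (mul_ne_zero hr.ne_zero hs.ne_zero) hh
    · exact hS.exists_orderOf_eq_mul_of_hasFixedPointOfOrders hp hexp hr hs hrs hfix
    · obtain ⟨e, he⟩ :=
        hS.exists_orderOf_eq_mul_of_hasFixedPointOfOrders hp hexp hs hr hrs.symm hfix
      exact ⟨e, he.trans (mul_comm s r)⟩

end GroupExtension

def Subgroup.toGroupExtension {G : Type*} [Group G] (N : Subgroup G) [N.Normal] :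
    GroupExtension N G (G ⧸ N) where
  inl := N.subtype
  rightHom := QuotientGroup.mk' N
  inl_injective := N.subtype_injective
  range_inl_eq_ker_rightHom := by rw [N.range_subtype, QuotientGroup.ker_mk']
  rightHom_surjective := QuotientGroup.mk'_surjective N

theorem SemidirectProduct.inducesAction_toGroupExtension {N H : Type*} [Group N] [Group H]
    (φ : H →* MulAut N) (hN : ∀ a b : N, Commute a b) :
    (toGroupExtension φ).InducesAction φ := by
  intro x n
  ext
  · simp [toGroupExtension, mul_left, inv_left, (hN _ _).eq]
  · simp [toGroupExtension]

theorem gk_graph_semidirect_general {G : Type*} [Group G] (N : Subgroup G) [N.Normal]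
    (p : ℕ) (hp : p.Prime) (helem : ∀ n ∈ N, n ^ p = 1)
    (hab : ∀ a ∈ N, ∀ b ∈ N, a * b = b * a)
    (φ : G ⧸ N →* MulAut N)
    (hφ : ∀ (g : G) (n : N), ((φ (QuotientGroup.mk g) n : G)) = g * n * g⁻¹) :
    Nat.card G = Nat.card (N ⋊[φ] (G ⧸ N)) ∧
    ∀ r s : ℕ, r.Prime → s.Prime → r ≠ s →
      ((∃ g : G, orderOf g = r * s) ↔ ∃ x : N ⋊[φ] (G ⧸ N), orderOf x = r * s) := by
  have hexp : ∀ n : N, n ^ p = 1 := fun n => Subtype.ext (helem n n.2)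
  have hG : N.toGroupExtension.InducesAction φ := hφ
  have hS : (toGroupExtension φ).InducesAction φ :=
    inducesAction_toGroupExtension φ fun a b => Subtype.ext (hab a a.2 b b.2)
  refine ⟨by rw [card, N.card_eq_card_quotient_mul_card_subgroup, mul_comm],
    fun r s hr hs hrs => ?_⟩
  rw [hG.exists_orderOf_eq_mul_iff hp hexp hr hs hrs,
    hS.exists_orderOf_eq_mul_iff hp hexp hr hs hrs]

/-- Let `N` be an elementary abelian normal subgroup of a finite group `G`, let
`H = G/N`, and let `φ : H → Aut(N)` be the homomorphism induced by conjugation.  Then the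
Gruenberg–Kegel graph of `G` equals the Gruenberg–Kegel graph of `N ⋊_φ H`: the two
groups have the same order and, for all distinct primes `r, s`, one contains an element
of order `r·s` iff the other does. -/
theorem gk_graph_semidirect {G : Type*} [Group G] [Finite G] (N : Subgroup G) [N.Normal]
    (p : ℕ) (hp : p.Prime) (helem : ∀ n ∈ N, n ^ p = 1)
    (hab : ∀ a ∈ N, ∀ b ∈ N, a * b = b * a)
    (φ : G ⧸ N →* MulAut N)
    (hφ : ∀ (g : G) (n : N), ((φ (QuotientGroup.mk g) n : G)) = g * n * g⁻¹) :
    Nat.card G = Nat.card (N ⋊[φ] (G ⧸ N)) ∧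
    ∀ r s : ℕ, r.Prime → s.Prime → r ≠ s →
      ((∃ g : G, orderOf g = r * s) ↔ ∃ x : N ⋊[φ] (G ⧸ N), orderOf x = r * s) :=
  gk_graph_semidirect_general N p hp helem hab φ hφ
end

section
/- Let G be a finite solvable group whose Gruenberg–Kegel graph contains three pairwise non-adjacent vertices. Then a contradiction arises; i.e., if G is a finite solvable group, then among any three distinct primes p, q, r dividing |G|, at least one of pq, pr, qr is the order of an element of G. -/
/-!
Induct on `|G|`. A nontrivial finite solvable group has a nontrivial abelian normal subgroup `T`
of prime exponent `t`. If `t ∉ {p, q, r}`, pass to `G ⧸ T`: the three primes still divide its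
order, and element orders lift from `G ⧸ T` to `G`. Otherwise say `t = p`. If `p` is adjacent
to neither `q` nor `r`, every element `g` of order `q` or `r` acts on `T` without nontrivial fixed
points, so its norm `∏ᵢ gⁱ • v` is trivial. A `{q, r}`-subgroup `K` whose order is divisible by
`q` and `r` (built by Schur–Zassenhaus) has an abelian normal subgroup of exponent `q`, say.
Either that subgroup contains two independent commuting elements of order `q`, or an element
of order `r` normalises a subgroup of order `q`. If that element also centralises the subgroup,
`q` and `r` are adjacent. In the remaining two configurations the elements of `K` are covered
by cyclic subgroups in two ways, and comparing the two products of norms gives `v ^ q = 1` on `T`,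
which contradicts `v ^ p = 1`.
-/

open Finset MonoidHom

section Group

variable {G : Type*} [Group G]

theorem Commute.orderOf_mul_eq_mul_of_prime_ne {p q : ℕ} (hp : p.Prime) (hq : q.Prime)
    (hpq : p ≠ q) {x y : G} (h : Commute x y) (hx : orderOf x = p) (hy : orderOf y = q) :
    orderOf (x * y) = p * q := by
  rw [h.orderOf_mul_eq_mul_orderOf_of_coprime (hx ▸ hy ▸ (Nat.coprime_primes hp hq).mpr hpq),
    hx, hy]

theorem mem_zpowers_pow_of_orderOf_eq_prime {g : G} {q j : ℕ} (hq : q.Prime)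
    (hg : orderOf g = q) (hj0 : j ≠ 0) (hjq : j < q) : g ∈ Subgroup.zpowers (g ^ j) :=
  mem_zpowers_pow_iff.mpr (by rw [hg, Nat.gcd_comm]; exact Nat.coprime_of_lt_prime hj0 hjq hq)

theorem conj_pow_mem_zpowers {m y : G} (hym : y * m * y⁻¹ ∈ Subgroup.zpowers m) (j : ℕ) :
    y ^ j * m * (y ^ j)⁻¹ ∈ Subgroup.zpowers m := by
  induction j with
  | zero => simp
  | succ j ih =>
    obtain ⟨k, hk⟩ := Subgroup.mem_zpowers_iff.mp ih
    have : y ^ (j + 1) * m * (y ^ (j + 1))⁻¹ = (y * m * y⁻¹) ^ k := by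
      rw [conj_zpow, hk]; group
    rw [this]
    exact zpow_mem hym k

theorem exists_orderOf_eq_of_surjective [Finite G] {Q : Type*} [Group Q] {f : G →* Q}
    (hf : Function.Surjective f) (x : Q) : ∃ g : G, orderOf g = orderOf x := by
  obtain ⟨g, rfl⟩ := hf x
  have hd : orderOf (f g) ∣ orderOf g := orderOf_map_dvd f g
  refine ⟨g ^ (orderOf g / orderOf (f g)), ?_⟩
  rw [orderOf_pow g, Nat.gcd_eq_right (Nat.div_dvd_of_dvd hd),
    Nat.div_div_self hd (orderOf_pos g).ne']

end Group

section FixedPointFree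

variable {G A : Type*} [Group G] [CommGroup A] [Finite A] (ρ : G →* MulAut A)

theorem prod_range_apply_pow_eq_one {g : G} (hg : FixedPointFree (ρ g)) {n : ℕ}
    (hn : g ^ n = 1) (v : A) : ∏ i ∈ range n, ρ (g ^ i) v = 1 := by
  obtain ⟨w, rfl⟩ := hg.commutatorMap_surjective v
  have key : ∀ i, ρ (g ^ i) (commutatorMap (ρ g) w) = ρ (g ^ i) w / ρ (g ^ (i + 1)) w := by
    intro i
    rw [commutatorMap_apply, map_div, pow_succ, map_mul, MulAut.mul_apply]
  simp_rw [key]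
  rw [prod_range_div', hn, pow_zero, div_self']

theorem prod_range_apply_pow_eq_one_of_ne_one {q : ℕ} (hq : q.Prime)
    (hfpf : ∀ g : G, orderOf g = q → FixedPointFree (ρ g)) {x : G} (hx : x ^ q = 1)
    (hx1 : x ≠ 1) (v : A) : ∏ i ∈ range q, ρ (x ^ i) v = 1 :=
  have := Fact.mk hq
  prod_range_apply_pow_eq_one ρ (hfpf x (orderOf_eq_prime hx hx1)) hx v

theorem pow_eq_one_of_commute_of_notMem_zpowers {q : ℕ} (hq : q.Prime)
    (hfpf : ∀ g : G, orderOf g = q → FixedPointFree (ρ g)) {a b : G} (hab : Commute a b)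
    (ha : orderOf a = q) (hb : orderOf b = q) (hba : b ∉ Subgroup.zpowers a) (v : A) :
    v ^ q = 1 := by
  have hbi : ∀ i ∈ range q, i ≠ 0 → b ^ i ≠ 1 := fun i hi hi0 =>
    pow_ne_one_of_lt_orderOf hi0 (hb ▸ mem_range.mp hi)
  have habj : ∀ j ∈ range q, a * b ^ j ≠ 1 := by
    intro j hj habj
    rcases eq_or_ne j 0 with rfl | hj0
    · rw [pow_zero, mul_one] at habj
      rw [habj, orderOf_one] at ha
      exact hq.ne_one ha.symm
    · have hbj : b ^ j ∈ Subgroup.zpowers a := by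
        rw [eq_inv_of_mul_eq_one_right habj]
        exact inv_mem (Subgroup.mem_zpowers a)
      exact hba (Subgroup.zpowers_le.mpr hbj
        (mem_zpowers_pow_of_orderOf_eq_prime hq hb hj0 (mem_range.mp hj)))
  have hbq : ∀ k, (b ^ k) ^ q = 1 := fun k => by
    rw [pow_right_comm, ← hb, pow_orderOf_eq_one, one_pow]
  have habq : ∀ j, (a * b ^ j) ^ q = 1 := fun j => by
    rw [(hab.pow_right j).mul_pow, ← ha, pow_orderOf_eq_one, one_mul, ha, hbq j]
  -- `(a * b ^ j) ^ i = a ^ i * (b ^ i) ^ j`: the norms of all `a * b ^ j` are trivial, and so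
  -- are those of the `b ^ i`, except for `i = 0`, which contributes `v ^ q`.
  calc v ^ q = ∏ i ∈ range q, ρ (a ^ i) (∏ j ∈ range q, ρ ((b ^ i) ^ j) v) := by
        rw [prod_eq_single_of_mem 0 (mem_range.mpr hq.pos)]
        · simp
        · intro i hi hi0
          rw [prod_range_apply_pow_eq_one_of_ne_one ρ hq hfpf
            (hbq i) (hbi i hi hi0), map_one]
    _ = ∏ j ∈ range q, ∏ i ∈ range q, ρ ((a * b ^ j) ^ i) v := by
        rw [prod_comm]
        refine prod_congr rfl fun i _ => ?_
        rw [map_prod]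
        refine prod_congr rfl fun j _ => ?_
        rw [(hab.pow_right j).mul_pow, pow_right_comm, map_mul, MulAut.mul_apply]
    _ = 1 := prod_eq_one fun j hj =>
        prod_range_apply_pow_eq_one_of_ne_one ρ hq hfpf (habq j) (habj j hj) v

theorem pow_eq_one_of_conj_mem_zpowers {q r : ℕ} (hq : q.Prime) (hr : r.Prime)
    (hfq : ∀ g : G, orderOf g = q → FixedPointFree (ρ g))
    (hfr : ∀ g : G, orderOf g = r → FixedPointFree (ρ g)) {m y : G} (hm : orderOf m = q)
    (hy : orderOf y = r) (hym : y * m * y⁻¹ ∈ Subgroup.zpowers m) (hcomm : ¬Commute y m)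
    (v : A) : v ^ q = 1 := by
  obtain ⟨d, hd⟩ : ∃ d : ℕ → G, ∀ j, d j = m * (y ^ j * m * (y ^ j)⁻¹)⁻¹ := ⟨_, fun _ => rfl⟩
  have hdq : ∀ j, d j ^ q = 1 := fun j => by
    obtain ⟨k, hk⟩ := Subgroup.mem_zpowers_iff.mp
      (mul_mem (Subgroup.mem_zpowers m) (inv_mem (conj_pow_mem_zpowers hym j)))
    rw [hd, ← hk, ← zpow_natCast, ← zpow_mul, mul_comm, zpow_mul, zpow_natCast, ← hm,
      pow_orderOf_eq_one, one_zpow]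
  have hd1 : ∀ j ∈ range r, j ≠ 0 → d j ≠ 1 := by
    intro j hj hj0 hdj
    apply hcomm
    obtain ⟨k, hk⟩ := Subgroup.mem_zpowers_iff.mp
      (mem_zpowers_pow_of_orderOf_eq_prime hr hy hj0 (mem_range.mp hj))
    rw [← hk]
    refine Commute.zpow_left ?_ k
    rw [hd, mul_inv_eq_one, eq_comm, mul_inv_eq_iff_eq_mul] at hdj
    exact hdj
  have hz : ∀ i j : ℕ, (m ^ i * y * (m ^ i)⁻¹) ^ j = d j ^ i * y ^ j := fun i j => by
    obtain ⟨k, hk⟩ := Subgroup.mem_zpowers_iff.mp (conj_pow_mem_zpowers hym j)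
    have hcomm' : Commute m (y ^ j * m * (y ^ j)⁻¹) := by
      rw [← hk]; exact Commute.zpow_right (Commute.refl m) k
    rw [hd, (hcomm'.inv_right).mul_pow, inv_pow, conj_pow, conj_pow]
    group
  have hzr : ∀ i : ℕ, (m ^ i * y * (m ^ i)⁻¹) ^ r = 1 := fun i => by
    rw [conj_pow, ← hy, pow_orderOf_eq_one]; group
  have hz1 : ∀ i : ℕ, m ^ i * y * (m ^ i)⁻¹ ≠ 1 := fun i h => by
    rw [mul_inv_eq_one, mul_eq_left] at h
    rw [h, orderOf_one] at hy
    exact hr.ne_one hy.symm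
  -- `(m ^ i * y * (m ^ i)⁻¹) ^ j = d j ^ i * y ^ j`: the norms of these conjugates of `y` are
  -- trivial, and so are those of the `d j`, except for `d 0 = 1`, which contributes `v ^ q`.
  calc v ^ q = ∏ j ∈ range r, ∏ i ∈ range q, ρ (d j ^ i) (ρ (y ^ j) v) := by
        rw [prod_eq_single_of_mem 0 (mem_range.mpr hr.pos)]
        · simp [hd]
        · intro j hj hj0
          exact prod_range_apply_pow_eq_one_of_ne_one ρ hq hfq (hdq j) (hd1 j hj hj0) _
    _ = ∏ i ∈ range q, ∏ j ∈ range r, ρ ((m ^ i * y * (m ^ i)⁻¹) ^ j) v := by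
        rw [prod_comm]
        simp only [hz, map_mul, MulAut.mul_apply]
    _ = 1 := prod_eq_one fun i _ =>
        prod_range_apply_pow_eq_one_of_ne_one ρ hr hfr (hzr i) (hz1 i) v

end FixedPointFree

section Solvable

variable {G : Type*} [Group G]

theorem Group.IsSolvable.exists_normal_commutator_eq_bot [Group.IsSolvable G] [Nontrivial G] :
    ∃ H : Subgroup G, H.Normal ∧ H ≠ ⊥ ∧ ⁅H, H⁆ = ⊥ := by
  by_contra! h
  obtain ⟨n, hn⟩ := Group.IsSolvable.solvable (G := G)
  have hne : ∀ k, derivedSeries G k ≠ ⊥ := by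
    intro k
    induction k with
    | zero => exact derivedSeries_zero G ▸ top_ne_bot
    | succ k ih => exact derivedSeries_succ G k ▸ h _ (derivedSeries_normal G k) ih
  exact hne n hn

theorem QuotientGroup.card_comap_mk' (T : Subgroup G) [T.Normal] (L : Subgroup (G ⧸ T)) :
    Nat.card (L.comap (QuotientGroup.mk' T)) = Nat.card T * Nat.card L :=
  QuotientGroup.card_preimage_mk T L

variable [Finite G]

theorem Group.IsSolvable.exists_normal_isMulCommutative_pow_prime_eq_one [Group.IsSolvable G]
    [Nontrivial G] :
    ∃ t : ℕ, t.Prime ∧ ∃ T : Subgroup G, T.Normal ∧ T ≠ ⊥ ∧ IsMulCommutative T ∧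
      ∀ x ∈ T, x ^ t = 1 := by
  obtain ⟨H, hHn, hHb, hHc⟩ := Group.IsSolvable.exists_normal_commutator_eq_bot (G := G)
  have hcomm : ∀ x ∈ H, ∀ y ∈ H, Commute x y := fun x hx y hy =>
    Subgroup.commutator_eq_bot_iff_le_centralizer.mp hHc hy x hx
  obtain ⟨t, ht, htH⟩ := Nat.exists_prime_and_dvd (mt Subgroup.card_eq_one.mp hHb)
  have := Fact.mk ht
  obtain ⟨⟨a, haH⟩, ha⟩ := exists_prime_orderOf_dvd_card' (G := H) t htH
  let T : Subgroup G :=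
    { carrier := {x | x ∈ H ∧ x ^ t = 1}
      one_mem' := ⟨H.one_mem, one_pow t⟩
      mul_mem' := fun ⟨hxH, hxt⟩ ⟨hyH, hyt⟩ =>
        ⟨H.mul_mem hxH hyH, by rw [(hcomm _ hxH _ hyH).mul_pow, hxt, hyt, one_mul]⟩
      inv_mem' := fun ⟨hxH, hxt⟩ => ⟨H.inv_mem hxH, by rw [inv_pow, hxt, inv_one]⟩ }
  refine ⟨t, ht, T, ⟨fun x ⟨hxH, hxt⟩ g => ⟨hHn.conj_mem x hxH g, ?_⟩⟩, ?_, ?_, fun x hx => hx.2⟩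
  · rw [conj_pow, hxt, mul_one, mul_inv_cancel]
  · rw [Subgroup.orderOf_mk] at ha
    refine Subgroup.ne_bot_iff_exists_ne_one.mpr ⟨⟨a, haH, ha ▸ pow_orderOf_eq_one a⟩, ?_⟩
    exact fun h => ht.ne_one (by simpa [Subtype.ext_iff, ← ha] using h)
  · exact ⟨⟨fun x y => Subtype.ext (hcomm _ x.2.1 _ y.2.1)⟩⟩

theorem Subgroup.prime_dvd_card_iff_eq_of_pow_eq_one (T : Subgroup G) (hT : T ≠ ⊥) {t : ℕ}
    (ht : t.Prime) (hTt : ∀ x ∈ T, x ^ t = 1) {s : ℕ} (hs : s.Prime) :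
    s ∣ Nat.card T ↔ s = t := by
  have := Fact.mk ht
  constructor
  · intro hsT
    have := Fact.mk hs
    obtain ⟨x, hx⟩ := exists_prime_orderOf_dvd_card' (G := T) s hsT
    rw [← Subgroup.orderOf_coe] at hx
    exact (Nat.prime_dvd_prime_iff_eq hs ht).mp (hx ▸ orderOf_dvd_of_pow_eq_one (hTt x x.2))
  · rintro rfl
    obtain ⟨x, hx1⟩ := (Subgroup.ne_bot_iff_exists_ne_one).mp hT
    exact orderOf_eq_prime (Subtype.ext (hTt x x.2)) hx1 ▸ _root_.orderOf_dvd_natCard x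

theorem Subgroup.prime_dvd_card_iff_of_pow_eq_one (T : Subgroup G) [T.Normal] (hT : T ≠ ⊥)
    {t : ℕ} (ht : t.Prime) (hTt : ∀ x ∈ T, x ^ t = 1) {s : ℕ} (hs : s.Prime) :
    s ∣ Nat.card G ↔ s ∣ Nat.card (G ⧸ T) ∨ s = t := by
  rw [T.card_eq_card_quotient_mul_card_subgroup, hs.dvd_mul,
    T.prime_dvd_card_iff_eq_of_pow_eq_one hT ht hTt hs]

theorem Subgroup.card_quotient_lt (T : Subgroup G) [T.Normal] (hT : T ≠ ⊥) :
    Nat.card (G ⧸ T) < Nat.card G := by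
  rw [T.card_eq_card_quotient_mul_card_subgroup]
  exact lt_mul_of_one_lt_right Nat.card_pos ((Subgroup.one_lt_card_iff_ne_bot T).mpr hT)

theorem QuotientGroup.exists_subgroup_card_eq_of_coprime (T : Subgroup G) [T.Normal]
    (L : Subgroup (G ⧸ T)) (hcop : (Nat.card T).Coprime (Nat.card L)) :
    ∃ K : Subgroup G, Nat.card K = Nat.card L := by
  set H := L.comap (QuotientGroup.mk' T)
  have hTH : T ≤ H := fun x hx => by
    simp [H, (QuotientGroup.eq_one_iff x).mpr hx]
  have hN : Nat.card (T.subgroupOf H) = Nat.card T :=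
    Nat.card_congr (Subgroup.subgroupOfEquivOfLe hTH).toEquiv
  have hcard : Nat.card T * Nat.card L = Nat.card H := (QuotientGroup.card_comap_mk' T L).symm
  have hindex : (T.subgroupOf H).index = Nat.card L := by
    have := (T.subgroupOf H).card_mul_index
    rw [hN, ← hcard] at this
    exact Nat.eq_of_mul_eq_mul_left Nat.card_pos this
  obtain ⟨C, hC⟩ := Subgroup.exists_right_complement'_of_coprime (hN ▸ hindex ▸ hcop)
  refine ⟨C.map H.subtype, ?_⟩
  rw [Subgroup.card_map_of_injective H.subtype_injective]
  have := hC.card_mul_card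
  rw [hN, ← hcard] at this
  exact Nat.eq_of_mul_eq_mul_left Nat.card_pos this

theorem Group.IsSolvable.exists_subgroup_prime_dvd_card_iff [Group.IsSolvable G] (π : Set ℕ) :
    ∃ K : Subgroup G, ∀ s : ℕ, s.Prime → (s ∣ Nat.card K ↔ s ∈ π ∧ s ∣ Nat.card G) := by
  obtain ⟨n, hn⟩ : ∃ n, Nat.card G = n := ⟨_, rfl⟩
  induction n using Nat.strong_induction_on generalizing G with
  | _ n ih =>
  rcases subsingleton_or_nontrivial G with _ | _
  · exact ⟨⊥, fun s hs => by simp [Nat.card_unique, hs.ne_one]⟩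
  obtain ⟨t, ht, T, hTn, hTb, -, hTt⟩ :=
    Group.IsSolvable.exists_normal_isMulCommutative_pow_prime_eq_one (G := G)
  obtain ⟨L, hL⟩ := ih _ (hn ▸ T.card_quotient_lt hTb) (G := G ⧸ T) rfl
  have hT {s : ℕ} (hs : s.Prime) := T.prime_dvd_card_iff_eq_of_pow_eq_one hTb ht hTt hs
  have hG {s : ℕ} (hs : s.Prime) := T.prime_dvd_card_iff_of_pow_eq_one hTb ht hTt hs
  by_cases htπ : t ∈ π
  · refine ⟨L.comap (QuotientGroup.mk' T), fun s hs => ?_⟩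
    rw [QuotientGroup.card_comap_mk', hs.dvd_mul, hT hs, hL s hs, hG hs]
    rcases eq_or_ne s t with rfl | hst <;> simp [*]
  · have hcop : (Nat.card T).Coprime (Nat.card L) := Nat.coprime_of_dvd fun s hs hsT hsL =>
      htπ ((hT hs).mp hsT ▸ ((hL s hs).mp hsL).1)
    obtain ⟨K, hK⟩ := QuotientGroup.exists_subgroup_card_eq_of_coprime T L hcop
    refine ⟨K, fun s hs => ?_⟩
    rw [hK, hL s hs, hG hs]
    rcases eq_or_ne s t with rfl | hst <;> simp [*]

end Solvable

section PrimeGraph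

open scoped IsMulCommutative

variable {G : Type*} [Group G]

theorem fixedPointFree_conjNormal {T : Subgroup G} [T.Normal] {p q : ℕ} (hp : p.Prime)
    (hq : q.Prime) (hpq : p ≠ q) (hTp : ∀ x ∈ T, x ^ p = 1) (hno : ∀ g : G, orderOf g ≠ p * q)
    {g : G} (hg : orderOf g = q) : FixedPointFree (MulAut.conjNormal g : MulAut T) := by
  intro n hn
  by_contra hn1
  have := Fact.mk hp
  have hnp : orderOf (n : G) = p := orderOf_eq_prime (hTp n n.2) (by simpa using hn1)
  have hcomm : Commute g n := by
    rw [Subtype.ext_iff, MulAut.conjNormal_apply, mul_inv_eq_iff_eq_mul] at hn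
    exact hn
  exact hno (n * g) (hcomm.symm.orderOf_mul_eq_mul_of_prime_ne hp hq hpq hnp hg)

theorem pow_eq_one_of_fixedPointFree_of_normal {K A : Type*} [Group K] [Finite K] [CommGroup A]
    [Finite A] (ρ : K →* MulAut A) {q r : ℕ} (hq : q.Prime) (hr : r.Prime) (hqr : q ≠ r)
    (hfq : ∀ g : K, orderOf g = q → FixedPointFree (ρ g))
    (hfr : ∀ g : K, orderOf g = r → FixedPointFree (ρ g)) (hno : ∀ g : K, orderOf g ≠ q * r)
    (hrK : r ∣ Nat.card K) (T : Subgroup K) [T.Normal] [IsMulCommutative T] (hTb : T ≠ ⊥)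
    (hTq : ∀ x ∈ T, x ^ q = 1) (v : A) : v ^ q = 1 := by
  have := Fact.mk hq
  obtain ⟨⟨a, haT⟩, ha1⟩ := (Subgroup.ne_bot_iff_exists_ne_one).mp hTb
  have ha : orderOf a = q := orderOf_eq_prime (hTq a haT) (by simpa using ha1)
  by_cases hcyc : T ≤ Subgroup.zpowers a
  · have := Fact.mk hr
    obtain ⟨y, hy⟩ := exists_prime_orderOf_dvd_card' r hrK
    by_cases hcomm : Commute y a
    · exact absurd (hcomm.symm.orderOf_mul_eq_mul_of_prime_ne hq hr hqr ha hy) (hno (a * y))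
    · exact pow_eq_one_of_conj_mem_zpowers ρ hq hr hfq hfr ha hy
        (hcyc (Subgroup.Normal.conj_mem inferInstance a haT y)) hcomm v
  · obtain ⟨b, hbT, hba⟩ := SetLike.not_le_iff_exists.mp hcyc
    have hb1 : b ≠ 1 := fun h => hba (h ▸ one_mem _)
    have hab : Commute a b := congrArg Subtype.val (mul_comm (⟨a, haT⟩ : T) ⟨b, hbT⟩)
    exact pow_eq_one_of_commute_of_notMem_zpowers ρ hq hfq hab ha
      (orderOf_eq_prime (hTq b hbT) hb1) hba v

theorem exists_orderOf_eq_mul_of_normal_pow_eq_one [Finite G] [Group.IsSolvable G] {p q r : ℕ}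
    (hp : p.Prime) (hq : q.Prime) (hr : r.Prime) (hpq : p ≠ q) (hpr : p ≠ r) (hqr : q ≠ r)
    (hqG : q ∣ Nat.card G) (hrG : r ∣ Nat.card G) (T : Subgroup G) [T.Normal]
    [IsMulCommutative T] (hTb : T ≠ ⊥) (hTp : ∀ x ∈ T, x ^ p = 1) :
    (∃ g : G, orderOf g = p * q) ∨ (∃ g : G, orderOf g = p * r) ∨
      (∃ g : G, orderOf g = q * r) := by
  by_contra! ⟨hnpq, hnpr, hnqr⟩
  obtain ⟨K, hK⟩ := Group.IsSolvable.exists_subgroup_prime_dvd_card_iff (G := G) {q, r}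
  have hqK : q ∣ Nat.card K := (hK q hq).mpr ⟨by simp, hqG⟩
  have hrK : r ∣ Nat.card K := (hK r hr).mpr ⟨by simp, hrG⟩
  have : Nontrivial K := Finite.one_lt_card_iff_nontrivial.mp
    (hq.one_lt.trans_le (Nat.le_of_dvd Nat.card_pos hqK))
  obtain ⟨t, ht, U, hUn, hUb, hUc, hUt⟩ :=
    Group.IsSolvable.exists_normal_isMulCommutative_pow_prime_eq_one (G := K)
  let ρ : K →* MulAut T := MulAut.conjNormal.comp K.subtype
  have hfix {s : ℕ} (hs : s.Prime) (hps : p ≠ s) (hno : ∀ g : G, orderOf g ≠ p * s) (g : K)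
      (hg : orderOf g = s) : FixedPointFree (ρ g) :=
    fixedPointFree_conjNormal hp hs hps hTp hno ((Subgroup.orderOf_coe g).trans hg)
  have htU : t ∣ Nat.card U := (U.prime_dvd_card_iff_eq_of_pow_eq_one hUb ht hUt ht).mpr rfl
  obtain ⟨htK, -⟩ := (hK t ht).mp (htU.trans U.card_subgroup_dvd_card)
  have hpt : p ≠ t := by rcases htK with rfl | rfl <;> assumption
  have hnqrK (g : K) : orderOf g ≠ q * r := (Subgroup.orderOf_coe g).symm.trans_ne (hnqr g)
  have hvt : ∀ v : T, v ^ t = 1 := by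
    rcases htK with rfl | rfl
    · exact pow_eq_one_of_fixedPointFree_of_normal ρ hq hr hqr (hfix hq hpq hnpq) (hfix hr hpr hnpr)
        hnqrK hrK U hUb hUt
    · exact pow_eq_one_of_fixedPointFree_of_normal ρ hr hq hqr.symm (hfix hr hpr hnpr)
        (hfix hq hpq hnpq) (fun g => mul_comm q t ▸ hnqrK g) hqK U hUb hUt
  obtain ⟨v, hv⟩ := (Subgroup.ne_bot_iff_exists_ne_one).mp hTb
  have hv1 := pow_gcd_eq_one.mpr ⟨Subtype.ext (hTp v v.2), hvt v⟩
  rw [(Nat.coprime_primes hp ht).mpr hpt, pow_one] at hv1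
  exact hv hv1

end PrimeGraph

/-- (Lucido) A finite solvable group has no coclique of size `3` in its Gruenberg–Kegel
graph: among any three distinct primes `p, q, r` dividing `|G|`, at least one of `pq`,
`pr`, `qr` is the order of an element of `G`. -/
theorem solvable_no_triple_coclique {G : Type*} [Group G] [Finite G]
    (hsolv : IsSolvable G) (p q r : ℕ) (hp : p.Prime) (hq : q.Prime) (hr : r.Prime)
    (hpq : p ≠ q) (hpr : p ≠ r) (hqr : q ≠ r)
    (hpG : p ∣ Nat.card G) (hqG : q ∣ Nat.card G) (hrG : r ∣ Nat.card G) :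
    (∃ g : G, orderOf g = p * q) ∨ (∃ g : G, orderOf g = p * r) ∨
      (∃ g : G, orderOf g = q * r) := by
  obtain ⟨n, hn⟩ : ∃ n, Nat.card G = n := ⟨_, rfl⟩
  induction n using Nat.strong_induction_on generalizing G with
  | _ n ih =>
  have : Group.IsSolvable G := hsolv
  have : Nontrivial G := Finite.one_lt_card_iff_nontrivial.mp
    (hp.one_lt.trans_le (Nat.le_of_dvd Nat.card_pos hpG))
  obtain ⟨t, ht, T, hTn, hTb, hTc, hTt⟩ :=
    Group.IsSolvable.exists_normal_isMulCommutative_pow_prime_eq_one (G := G)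
  by_cases htp : t = p
  · subst htp
    exact exists_orderOf_eq_mul_of_normal_pow_eq_one hp hq hr hpq hpr hqr hqG hrG T hTb hTt
  by_cases htq : t = q
  · subst htq
    have := exists_orderOf_eq_mul_of_normal_pow_eq_one hq hp hr hpq.symm hqr hpr hpG hrG T hTb hTt
    rw [mul_comm t p] at this
    tauto
  by_cases htr : t = r
  · subst htr
    have := exists_orderOf_eq_mul_of_normal_pow_eq_one hr hp hq hpr.symm hqr.symm hpq hpG hqG T
      hTb hTt
    rw [mul_comm t p, mul_comm t q] at this
    tauto
  have hdvd {s : ℕ} (hs : s.Prime) (hst : s ≠ t) (hsG : s ∣ Nat.card G) : s ∣ Nat.card (G ⧸ T) :=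
    ((T.prime_dvd_card_iff_of_pow_eq_one hTb ht hTt hs).mp hsG).resolve_right hst
  have hlift {k : ℕ} : (∃ x : G ⧸ T, orderOf x = k) → ∃ g : G, orderOf g = k := fun ⟨x, hx⟩ =>
    hx ▸ exists_orderOf_eq_of_surjective (QuotientGroup.mk'_surjective T) x
  exact (ih _ (hn ▸ T.card_quotient_lt hTb) (inferInstance : Group.IsSolvable (G ⧸ T))
    (hdvd hp (Ne.symm htp) hpG) (hdvd hq (Ne.symm htq) hqG)
    (hdvd hr (Ne.symm htr) hrG) rfl).imp hlift (Or.imp hlift hlift)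
end

section
/- For any odd prime p and integer m ≥ 5, each of p^m − 1 and p^m + 1 has at least two distinct prime divisors. -/
/-!
Both numbers are even, so it suffices to exhibit an odd divisor other than `1` of each.
For odd `m`, `p ^ m ∓ 1 = (p ∓ 1) * ∑ i < m, p ^ i * (±1) ^ (m - 1 - i)`, and the sum of `m` odd
terms is odd. For `m = 2 * t`, `p ^ m + 1 ≡ 2 (mod 4)`, while `p ^ m - 1 = (p ^ t + 1) * (p ^ t - 1)`
has a factor `≡ 2 (mod 4)` larger than `2`.
-/

open Finset

theorem two_le_card_primeFactors_of_odd_dvd {n s : ℕ} (hn : n ≠ 0) (h2 : 2 ∣ n) (hs : s ∣ n)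
    (hodd : Odd s) (hs1 : s ≠ 1) : 2 ≤ n.primeFactors.card :=
  one_lt_card.mpr ⟨2, Nat.mem_primeFactors.mpr ⟨Nat.prime_two, h2, hn⟩, s.minFac,
    Nat.mem_primeFactors.mpr ⟨Nat.minFac_prime hs1, (Nat.minFac_dvd s).trans hs, hn⟩,
    (hodd.ne_two_of_dvd_nat (Nat.minFac_dvd s)).symm⟩

theorem exists_odd_dvd_natAbs_pow_sub_pow {x y : ℤ} (hx : Odd x) (hy : Odd y) {m : ℕ}
    (hm : Odd m) (hlt : (x - y).natAbs < (x ^ m - y ^ m).natAbs) :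
    ∃ s, s ∣ (x ^ m - y ^ m).natAbs ∧ Odd s ∧ s ≠ 1 := by
  have hS : (∑ i ∈ range m, x ^ i * y ^ (m - 1 - i)) * (x - y) = x ^ m - y ^ m :=
    geom_sum₂_mul x y m
  have hS_odd : Odd (∑ i ∈ range m, x ^ i * y ^ (m - 1 - i)) := by
    rw [← Int.not_even_iff_odd, even_iff_two_dvd]
    refine not_dvd_geom_sum₂ Int.prime_two (hx.sub_odd hy).two_dvd ?_ ?_
    · rwa [← even_iff_two_dvd, Int.not_even_iff_odd]
    · exact_mod_cast hm.not_two_dvd_nat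
  rw [← hS, Int.natAbs_mul] at hlt ⊢
  refine ⟨_, dvd_mul_right _ _, Int.natAbs_odd.mpr hS_odd, fun h => ?_⟩
  rw [h, one_mul] at hlt
  exact hlt.false

theorem exists_odd_dvd_of_mod_four_eq_two {n : ℕ} (h4 : n % 4 = 2) (h2 : n ≠ 2) :
    ∃ s, s ∣ n ∧ Odd s ∧ s ≠ 1 :=
  ⟨n / 2, Nat.div_dvd_of_dvd (by omega), Nat.odd_iff.mpr (by omega), by omega⟩

theorem exists_odd_dvd_sq_sub_one {b : ℕ} (hb : Odd b) (hb3 : 3 < b) :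
    ∃ s, s ∣ b ^ 2 - 1 ∧ Odd s ∧ s ≠ 1 := by
  have hfac : b ^ 2 - 1 = (b + 1) * (b - 1) := by simpa using Nat.sq_sub_sq b 1
  rcases Nat.odd_mod_four_iff.mp (Nat.odd_iff.mp hb) with h4 | h4
  · obtain ⟨s, hs, hs_odd, hs1⟩ :=
      exists_odd_dvd_of_mod_four_eq_two (n := b + 1) (by omega) (by omega)
    exact ⟨s, hfac ▸ hs.mul_right _, hs_odd, hs1⟩
  · obtain ⟨s, hs, hs_odd, hs1⟩ :=
      exists_odd_dvd_of_mod_four_eq_two (n := b - 1) (by omega) (by omega)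
    exact ⟨s, hfac ▸ hs.mul_left _, hs_odd, hs1⟩

theorem exists_odd_dvd_pow_sub_one {a m : ℕ} (ha : Odd a) (ha1 : 1 < a) (hm : 3 ≤ m) :
    ∃ s, s ∣ a ^ m - 1 ∧ Odd s ∧ s ≠ 1 := by
  rcases Nat.even_or_odd m with ⟨t, rfl⟩ | hm_odd
  · rw [← two_mul, pow_mul']
    refine exists_odd_dvd_sq_sub_one ha.pow ?_
    calc 3 < a ^ 2 := by nlinarith [Nat.odd_iff.mp ha]
      _ ≤ a ^ t := Nat.pow_le_pow_right (by omega) (by omega)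
  · have hlt : a < a ^ m := lt_self_pow₀ ha1 (by omega)
    have := exists_odd_dvd_natAbs_pow_sub_pow ((Int.odd_coe_nat a).mpr ha) odd_one hm_odd
    rw [one_pow, ← Nat.cast_pow, show ((a ^ m : ℕ) - 1 : ℤ).natAbs = a ^ m - 1 by omega] at this
    exact this (by omega)

theorem exists_odd_dvd_pow_add_one {a m : ℕ} (ha : Odd a) (ha1 : 1 < a) (hm : 2 ≤ m) :
    ∃ s, s ∣ a ^ m + 1 ∧ Odd s ∧ s ≠ 1 := by
  rcases Nat.even_or_odd m with ⟨t, rfl⟩ | hm_odd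
  · rw [← two_mul, pow_mul']
    have h4 : (a ^ t) ^ 2 % 4 = 1 := by
      obtain ⟨k, hk⟩ := ha.pow (n := t)
      rw [hk]; ring_nf; omega
    have h1 : 1 < (a ^ t) ^ 2 := Nat.one_lt_pow (by omega) (Nat.one_lt_pow (by omega) ha1)
    exact exists_odd_dvd_of_mod_four_eq_two (by omega) (by omega)
  · have hlt : a < a ^ m := lt_self_pow₀ ha1 (by omega)
    have := exists_odd_dvd_natAbs_pow_sub_pow ((Int.odd_coe_nat a).mpr ha) odd_neg_one hm_odd
    simp only [hm_odd.neg_one_pow, sub_neg_eq_add, ← Nat.cast_pow] at this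
    rw [show ((a ^ m : ℕ) + 1 : ℤ).natAbs = a ^ m + 1 by omega] at this
    exact this (by omega)

/-- For any odd prime `p` and integer `m ≥ 5`, each of `p^m − 1` and `p^m + 1` has at
least two distinct prime divisors. -/
theorem two_prime_divisors_of_pm (p m : ℕ) (hp : p.Prime) (hodd : Odd p) (hm : 5 ≤ m) :
    2 ≤ (p ^ m - 1).primeFactors.card ∧ 2 ≤ (p ^ m + 1).primeFactors.card := by
  have hpm : 1 < p ^ m := Nat.one_lt_pow (by omega) hp.one_lt
  have hpm_odd := Nat.odd_iff.mp (hodd.pow (n := m))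
  obtain ⟨s, hs, hs_odd, hs1⟩ := exists_odd_dvd_pow_sub_one hodd hp.one_lt (by omega : 3 ≤ m)
  obtain ⟨r, hr, hr_odd, hr1⟩ := exists_odd_dvd_pow_add_one hodd hp.one_lt (by omega : 2 ≤ m)
  exact ⟨two_le_card_primeFactors_of_odd_dvd (by omega) (by omega) hs hs_odd hs1,
    two_le_card_primeFactors_of_odd_dvd (by omega) (by omega) hr hr_odd hr1⟩
end
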